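/- Let f ∈ ℝ[x] and v > 0 a real number, let J be an ideal with (f/v − 1)^η ∈ J for some integer η > 0. Define s = √v · ∑_{j=0}^{η−1} C(1/2, j)(f/v − 1)^j and σ = s². Then σ is a sum of squares and f − σ ∈ J. -/

import Mathlib

/-!
Put `g = f/v - 1`, so that `f = v (1 + g)`. The truncation `p` below degree `η` of the binomial
series `(1 + X)^{1/2}` satisfies `p² ≡ 1 + X mod X^η`, because the binomial series is a
multiplicative function of its exponent. Substituting `X ↦ g` gives
`s² = v p(g)² ≡ v (1 + g) = f` modulo `g^η ∈ J`, and `s²` is a square.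
-/

open Polynomial

theorem Ring.choose_eq_prod_range_div {K : Type*} [Field K] [CharZero K] (r : K) (n : ℕ) :
    Ring.choose r n = (∏ i ∈ Finset.range n, (r - i)) / n.factorial := by
  rw [eq_div_iff (Nat.cast_ne_zero.2 n.factorial_ne_zero), ← descPochhammer_eval_eq_prod_range,
    ← descPochhammer_map (Int.castRingHom K), eval_map, ← algebraMap_int_eq, ← aeval_def,
    aeval_eq_smeval, descPochhammer_eq_factorial_smul_choose, nsmul_eq_mul, mul_comm]

theorem Polynomial.X_pow_dvd_sub_of_trunc_eq {R : Type*} [CommRing R] {n : ℕ} {p q : R[X]}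
    (h : PowerSeries.trunc n (p : PowerSeries R) = PowerSeries.trunc n q) : X ^ n ∣ p - q := by
  rw [X_pow_dvd_iff]
  intro d hd
  simpa [PowerSeries.coeff_trunc, hd, sub_eq_zero] using congr_arg (coeff · d) h

namespace PowerSeries

variable {R A : Type*} [CommRing R] [BinomialRing R] [CommRing A] [Algebra R A]

theorem binomialSeries_nsmul (k : ℕ) (r : R) :
    binomialSeries A (k • r) = binomialSeries A r ^ k := by
  induction k with
  | zero => simp
  | succ k ih => rw [succ_nsmul, binomialSeries_add, ih, pow_succ]

theorem X_pow_dvd_trunc_binomialSeries_pow_sub {r : R} {k d : ℕ} (h : k • r = d) (n : ℕ) :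
    (Polynomial.X : A[X]) ^ n ∣ trunc n (binomialSeries A r) ^ k - (1 + Polynomial.X) ^ d := by
  apply X_pow_dvd_sub_of_trunc_eq
  rw [Polynomial.coe_pow, trunc_trunc_pow, ← binomialSeries_nsmul, h, binomialSeries_nat]
  simp

end PowerSeries

theorem stmt13_general (n : ℕ) (f : MvPolynomial (Fin n) ℝ)
    (J : Ideal (MvPolynomial (Fin n) ℝ))
    (v : ℝ) (hv : 0 < v)
    (η : ℕ)
    (hf : (MvPolynomial.C v⁻¹ * f - 1) ^ η ∈ J)
    (c : ℕ → ℝ)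
    (hc : ∀ j, c j = (∏ i ∈ Finset.range j, ((1:ℝ)/2 - i)) / (Nat.factorial j))
    (s : MvPolynomial (Fin n) ℝ)
    (hs : s = MvPolynomial.C (Real.sqrt v) *
          ∑ j ∈ Finset.range η, MvPolynomial.C (c j) * (MvPolynomial.C v⁻¹ * f - 1) ^ j) :
    IsSumSq (s ^ 2) ∧ f - s ^ 2 ∈ J := by
  set g := MvPolynomial.C v⁻¹ * f - 1
  set S := ∑ j ∈ Finset.range η, MvPolynomial.C (c j) * g ^ j
  have hS : aeval g (PowerSeries.trunc η (PowerSeries.binomialSeries ℝ (1 / 2 : ℝ))) = S := by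
    simp [aeval_def, PowerSeries.eval₂_trunc_eq_sum_range, MvPolynomial.algebraMap_eq, S, hc,
      Ring.choose_eq_prod_range_div]
  have hdvd : g ^ η ∣ S ^ 2 - (1 + g) := by
    have key := map_dvd (aeval g)
      (PowerSeries.X_pow_dvd_trunc_binomialSeries_pow_sub (A := ℝ) (r := (1 / 2 : ℝ))
        (k := 2) (d := 1) (by norm_num) η)
    rwa [map_pow, aeval_X, map_sub, map_pow, hS, pow_one, map_add, map_one, aeval_X] at key
  have hf_sub : f - s ^ 2 = MvPolynomial.C v * -(S ^ 2 - (1 + g)) := by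
    have hf_eq : f = MvPolynomial.C v * (1 + g) := by
      simp [g, ← mul_assoc, ← map_mul, hv.ne']
    rw [hs, mul_pow, ← map_pow, Real.sq_sqrt hv.le, hf_eq]
    ring
  refine ⟨(IsSquare.sq s).isSumSq, ?_⟩
  rw [hf_sub]
  exact J.mul_mem_left _ (J.neg_mem_iff.2 (J.mem_of_dvd hdvd hf))

/-- If `(f/v − 1)^η ∈ J` with `v > 0`, then
`σ = (√v ∑_{j<η} C(1/2,j)(f/v−1)^j)²` is SOS and `f − σ ∈ J`. -/
theorem stmt13 (n : ℕ) (f : MvPolynomial (Fin n) ℝ)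
    (J : Ideal (MvPolynomial (Fin n) ℝ))
    (v : ℝ) (hv : 0 < v)
    (η : ℕ) (hη : 0 < η)
    (hf : (MvPolynomial.C v⁻¹ * f - 1) ^ η ∈ J)
    (c : ℕ → ℝ)
    (hc : ∀ j, c j = (∏ i ∈ Finset.range j, ((1:ℝ)/2 - i)) / (Nat.factorial j))
    (s : MvPolynomial (Fin n) ℝ)
    (hs : s = MvPolynomial.C (Real.sqrt v) *
          ∑ j ∈ Finset.range η, MvPolynomial.C (c j) * (MvPolynomial.C v⁻¹ * f - 1) ^ j) :
    IsSumSq (s ^ 2) ∧ f - s ^ 2 ∈ J :=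
  stmt13_general n f J v hv η hf c hc s hs
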